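/- arXiv:2408.00910 — 7 statements merged into one kernel-verified Lean document; each statement's English description precedes it below -/
import Mathlib

section
/- For finite groups G and H, nil(G × H) = nil(G) × nil(H), i.e., an element (g,h) of G × H lies in the nilpotentizer of G × H if and only if g ∈ nil(G) and h ∈ nil(H). -/
def nilpotentizer (G : Type*) [Group G] : Set G :=
  {g | ∀ h : G, Group.IsNilpotent (Subgroup.closure ({g, h} : Set G))}

def nilpotentizerOf {G : Type*} [Group G] (x : G) : Set G :=
  {g | Group.IsNilpotent (Subgroup.closure ({g, x} : Set G))}

def nilpotentGraph (G : Type*) [Group G] :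
    SimpleGraph {x : G // x ∉ nilpotentizer G} where
  Adj a b := a ≠ b ∧ Group.IsNilpotent (Subgroup.closure ({(a : G), (b : G)} : Set G))
  symm := ⟨fun a b ⟨hne, h⟩ => ⟨fun e => hne e.symm, by rwa [Set.pair_comm]⟩⟩
  loopless := ⟨fun a ⟨h, _⟩ => h rfl⟩

noncomputable def hypercenter (G : Type*) [Group G] : Subgroup G := Subgroup.upperCentralSeries G (Nat.card G)

instance {G : Type*} [Group G] : (hypercenter G).Normal := by
  unfold hypercenter; infer_instance

namespace Subgroup

variable {G N : Type*} [Group G] [Group N]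

theorem isNilpotent_of_le {K L : Subgroup G} (hKL : K ≤ L) [Group.IsNilpotent L] :
    Group.IsNilpotent K :=
  Group.nilpotent_of_mulEquiv (subgroupOfEquivOfLe hKL)

theorem isNilpotent_map (f : G →* N) (K : Subgroup G) [Group.IsNilpotent K] :
    Group.IsNilpotent (K.map f) :=
  Group.nilpotent_of_surjective (f.subgroupMap K) (f.subgroupMap_surjective K)

theorem isNilpotent_iff_map_fst_snd (K : Subgroup (G × N)) :
    Group.IsNilpotent K ↔
      Group.IsNilpotent (K.map (MonoidHom.fst G N)) ∧
        Group.IsNilpotent (K.map (MonoidHom.snd G N)) := by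
  constructor
  · intro _
    exact ⟨isNilpotent_map _ K, isNilpotent_map _ K⟩
  · rintro ⟨_, _⟩
    have : Group.IsNilpotent ((K.map (MonoidHom.fst G N)).prod (K.map (MonoidHom.snd G N))) :=
      Group.nilpotent_of_mulEquiv (prodEquiv _ _).symm
    exact isNilpotent_of_le (le_prod_iff.mpr ⟨le_rfl, le_rfl⟩)

theorem isNilpotent_closure_pair_prod_iff (g x : G) (h y : N) :
    Group.IsNilpotent (closure ({(g, h), (x, y)} : Set (G × N))) ↔
      Group.IsNilpotent (closure ({g, x} : Set G)) ∧
        Group.IsNilpotent (closure ({h, y} : Set N)) := by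
  rw [isNilpotent_iff_map_fst_snd, MonoidHom.map_closure, MonoidHom.map_closure,
    Set.image_pair, Set.image_pair]
  rfl

end Subgroup

theorem nilpotentizer_prod_general {G H : Type*} [Group G] [Group H]
    (g : G) (h : H) :
    (g, h) ∈ nilpotentizer (G × H) ↔ g ∈ nilpotentizer G ∧ h ∈ nilpotentizer H := by
  constructor
  · intro hgh
    exact ⟨fun x => ((Subgroup.isNilpotent_closure_pair_prod_iff g x h 1).mp (hgh (x, 1))).1,
      fun y => ((Subgroup.isNilpotent_closure_pair_prod_iff g 1 h y).mp (hgh (1, y))).2⟩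
  · rintro ⟨hg, hh⟩ ⟨x, y⟩
    exact (Subgroup.isNilpotent_closure_pair_prod_iff g x h y).mpr ⟨hg x, hh y⟩

theorem nilpotentizer_prod {G H : Type*} [Group G] [Group H] [Finite G] [Finite H]
    (g : G) (h : H) :
    (g, h) ∈ nilpotentizer (G × H) ↔ g ∈ nilpotentizer G ∧ h ∈ nilpotentizer H :=
  nilpotentizer_prod_general g h
end

section
/- Let G be a finite group and x, y ∈ G. Then ⟨x, y⟩ is a nilpotent subgroup of G if and only if ⟨x·Z*(G), y·Z*(G)⟩ is a nilpotent subgroup of G/Z*(G). -/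
namespace Subgroup

variable {G G' : Type*} [Group G] [Group G']

theorem lowerCentralSeries_add_eq_bot_of_le_upperCentralSeries (S : Subgroup G) {m k : ℕ}
    (h : S.lowerCentralSeries m ≤ upperCentralSeries G k) :
    S.lowerCentralSeries (m + k) = ⊥ := by
  induction k generalizing m with
  | zero => exact le_bot_iff.mp h
  | succ k ih =>
    rw [← add_assoc, add_right_comm]
    refine ih ?_
    calc S.lowerCentralSeries (m + 1) = ⁅S.lowerCentralSeries m, S⁆ := rfl
      _ ≤ ⁅upperCentralSeries G (k + 1), ⊤⁆ := commutator_mono h le_top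
      _ ≤ upperCentralSeries G k := commutator_upperCentralSeries_top_le G k

theorem isNilpotent_map_iff_of_ker_le_upperCentralSeries (f : G →* G') {k : ℕ}
    (hf : f.ker ≤ upperCentralSeries G k) (S : Subgroup G) :
    Group.IsNilpotent (S.map f) ↔ Group.IsNilpotent S := by
  simp only [isNilpotent_iff_lowerCentralSeries, ← map_lowerCentralSeries, map_eq_bot_iff]
  constructor
  · rintro ⟨m, hm⟩
    exact ⟨m + k, S.lowerCentralSeries_add_eq_bot_of_le_upperCentralSeries (hm.trans hf)⟩
  · rintro ⟨m, hm⟩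
    exact ⟨m, hm ▸ bot_le⟩

end Subgroup

theorem nilpotent_closure_pair_iff_quotient_hypercenter_general {G : Type*} [Group G]
    (x y : G) :
    Group.IsNilpotent (Subgroup.closure ({x, y} : Set G)) ↔
      Group.IsNilpotent (Subgroup.closure
        ({(x : G ⧸ hypercenter G), (y : G ⧸ hypercenter G)} : Set (G ⧸ hypercenter G))) := by
  have hclosure : Subgroup.closure ({(x : G ⧸ hypercenter G), (y : G ⧸ hypercenter G)} : Set _) =
      (Subgroup.closure {x, y}).map (QuotientGroup.mk' (hypercenter G)) := by
    rw [MonoidHom.map_closure, Set.image_pair]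
    rfl
  rw [hclosure]
  exact (Subgroup.isNilpotent_map_iff_of_ker_le_upperCentralSeries _
    (QuotientGroup.ker_mk' (hypercenter G)).le _).symm

theorem nilpotent_closure_pair_iff_quotient_hypercenter {G : Type*} [Group G] [Finite G]
    (x y : G) :
    Group.IsNilpotent (Subgroup.closure ({x, y} : Set G)) ↔
      Group.IsNilpotent (Subgroup.closure
        ({(x : G ⧸ hypercenter G), (y : G ⧸ hypercenter G)} : Set (G ⧸ hypercenter G))) :=
  nilpotent_closure_pair_iff_quotient_hypercenter_general x y
end

section
/- Let G be a finite group with a strongly self-centralizing subgroup U. Then for every h ∈ G \ U and every nonidentity x ∈ U, the subgroup ⟨x, h⟩ is not nilpotent. -/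
/-! If `⟨x, h⟩` were nilpotent, its center would contain some `z ≠ 1`. Then `z` centralizes `x`,
so `z ∈ C_G(x) = U`, hence `C_G(z) = U`; but `z` also centralizes `h`, forcing `h ∈ U`. -/

namespace Subgroup

variable {G : Type*} [Group G]

theorem exists_ne_one_forall_commute_of_isNilpotent {H : Subgroup G} [Group.IsNilpotent H]
    (hH : H ≠ ⊥) : ∃ z ∈ H, z ≠ 1 ∧ ∀ g ∈ H, g * z = z * g := by
  have : Nontrivial H := (nontrivial_iff_ne_bot H).mpr hH
  obtain ⟨⟨z, hzc⟩, hz1⟩ := ne_bot_iff_exists_ne_one.mp (Group.IsNilpotent.center_ne_bot H)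
  refine ⟨z, z.2, fun h => hz1 (Subtype.ext (Subtype.ext h)), fun g hg => ?_⟩
  exact congrArg Subtype.val (mem_center_iff.mp hzc ⟨g, hg⟩)

theorem centralizer_singleton_eq_of_commute {U : Subgroup G}
    (hU : ∀ x : G, x ∈ U → x ≠ 1 → centralizer {x} = U)
    {x z : G} (hx : x ∈ U) (hx1 : x ≠ 1) (hz1 : z ≠ 1) (hzx : z * x = x * z) :
    centralizer {z} = U :=
  hU z (hU x hx hx1 ▸ mem_centralizer_singleton_iff.mpr hzx) hz1

end Subgroup

theorem not_nilpotent_of_stronglySelfCentralizing_general {G : Type*} [Group G]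
    (U : Subgroup G)
    (hU : ∀ x : G, x ∈ U → x ≠ 1 → Subgroup.centralizer {x} = U)
    (h : G) (hh : h ∉ U) (x : G) (hx : x ∈ U) (hx1 : x ≠ 1) :
    ¬ Group.IsNilpotent (Subgroup.closure ({x, h} : Set G)) := by
  intro hnil
  have hxH : x ∈ Subgroup.closure ({x, h} : Set G) := Subgroup.subset_closure (by simp)
  have hhH : h ∈ Subgroup.closure ({x, h} : Set G) := Subgroup.subset_closure (by simp)
  have hH : Subgroup.closure ({x, h} : Set G) ≠ ⊥ := fun hbot => hx1 (by simpa [hbot] using hxH)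
  obtain ⟨z, -, hz1, hz⟩ := Subgroup.exists_ne_one_forall_commute_of_isNilpotent hH
  have hCz : Subgroup.centralizer {z} = U :=
    Subgroup.centralizer_singleton_eq_of_commute hU hx hx1 hz1 (hz x hxH).symm
  exact hh (hCz ▸ Subgroup.mem_centralizer_singleton_iff.mpr (hz h hhH))

theorem not_nilpotent_of_stronglySelfCentralizing {G : Type*} [Group G] [Finite G]
    (U : Subgroup G)
    (hU : ∀ x : G, x ∈ U → x ≠ 1 → Subgroup.centralizer {x} = U)
    (h : G) (hh : h ∉ U) (x : G) (hx : x ∈ U) (hx1 : x ≠ 1) :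
    ¬ Group.IsNilpotent (Subgroup.closure ({x, h} : Set G)) :=
  not_nilpotent_of_stronglySelfCentralizing_general U hU h hh x hx hx1
end

section
/- Let G and H be finite non-nilpotent groups. Then the nilpotent graph of G × H is connected. -/
/-! A finite group in which any two elements generate a nilpotent subgroup is nilpotent: for
each prime `p` the elements of `p`-power order are then closed under products, so they form a
normal `p`-subgroup, which is therefore the Sylow `p`-subgroup. Hence non-nilpotent `G` and `H`
contain elements `x₀ ∉ nil G` and `y₀ ∉ nil H`. Since `nil (G × H) = nil G × nil H` and commuting
vertices are equal or adjacent, a vertex `(a, b)` with `b ∉ nil H` is joined to `(x₀, 1)` through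
`(1, b)`, and one with `a ∉ nil G` through `(a, 1)` and `(1, y₀)`. -/

open Subgroup

section TwoGenerated

variable {G : Type*} [Group G]

theorem Subgroup.isNilpotent_of_le_s11 {A B : Subgroup G} (hAB : A ≤ B)
    (hB : Group.IsNilpotent B) : Group.IsNilpotent A :=
  Group.nilpotent_of_mulEquiv (subgroupOfEquivOfLe hAB)

theorem Subgroup.isNilpotent_map_s11 {G' : Type*} [Group G'] (f : G →* G') {K : Subgroup G}
    (hK : Group.IsNilpotent K) : Group.IsNilpotent (K.map f) :=
  Group.nilpotent_of_surjective (f.subgroupMap K) (f.subgroupMap_surjective K)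

theorem Subgroup.isNilpotent_prod {G' : Type*} [Group G'] {A : Subgroup G} {B : Subgroup G'}
    (hA : Group.IsNilpotent A) (hB : Group.IsNilpotent B) : Group.IsNilpotent (A.prod B) :=
  Group.nilpotent_of_mulEquiv (prodEquiv A B).symm

theorem Commute.isNilpotent_closure_pair {x y : G} (h : Commute x y) :
    Group.IsNilpotent (closure ({x, y} : Set G)) := by
  have : IsMulCommutative (closure ({x, y} : Set G)) := by
    refine isMulCommutative_closure ?_
    rintro a (rfl | rfl) b (rfl | rfl)
    exacts [rfl, h, h.symm, rfl]
  open scoped IsMulCommutative in infer_instance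

variable {p : ℕ}

theorem Sylow.mem_of_pow_prime_pow_eq_one (P : Sylow p G) [(P : Subgroup G).Normal] {g : G}
    {k : ℕ} (hg : g ^ p ^ k = 1) : g ∈ P := by
  have hg : IsPGroup p (zpowers g) :=
    IsPGroup.of_card_dvd_pow ((Nat.card_zpowers g).symm ▸ orderOf_dvd_of_pow_eq_one hg)
  exact zpowers_le.mp (sup_eq_right.mp (P.is_maximal' (hg.to_sup_of_normal_right P.isPGroup')
    le_sup_right))

variable [Finite G] [Fact p.Prime]

theorem exists_pow_prime_pow_mul_eq_one {x y : G} {k l : ℕ}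
    (hxy : Group.IsNilpotent (closure ({x, y} : Set G))) (hx : x ^ p ^ k = 1)
    (hy : y ^ p ^ l = 1) : ∃ m, (x * y) ^ p ^ m = 1 := by
  let K := closure ({x, y} : Set G)
  let P : Sylow p K := default
  have : (P : Subgroup K).Normal := by
    have := (Group.isNilpotent_of_finite_tfae (G := K)).out 0 3
    exact this.mp hxy p ‹_› P
  let x' : K := ⟨x, subset_closure (by simp)⟩
  let y' : K := ⟨y, subset_closure (by simp)⟩
  have hx' : x' ∈ P := P.mem_of_pow_prime_pow_eq_one (k := k) (Subtype.ext hx)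
  have hy' : y' ∈ P := P.mem_of_pow_prime_pow_eq_one (k := l) (Subtype.ext hy)
  obtain ⟨m, hm⟩ := P.isPGroup' ⟨x' * y', mul_mem hx' hy'⟩
  exact ⟨m, congrArg (fun z : P => (z : G)) hm⟩

variable (p) in
def primePowerOrderSubgroup
    (hG : ∀ x y : G, Group.IsNilpotent (closure ({x, y} : Set G))) : Subgroup G where
  carrier := {g | ∃ k, g ^ p ^ k = 1}
  mul_mem' := fun ⟨_, hx⟩ ⟨_, hy⟩ => exists_pow_prime_pow_mul_eq_one (hG _ _) hx hy
  one_mem' := ⟨0, one_pow _⟩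
  inv_mem' := fun ⟨k, hk⟩ => ⟨k, by rw [inv_pow, hk, inv_one]⟩

theorem isNilpotent_of_forall_isNilpotent_closure_pair
    (hG : ∀ x y : G, Group.IsNilpotent (closure ({x, y} : Set G))) : Group.IsNilpotent G := by
  apply ((Group.isNilpotent_of_finite_tfae (G := G)).out 3 0).mp
  intro p _ P
  let T := primePowerOrderSubgroup p hG
  have hT : IsPGroup p T := fun ⟨_, k, hk⟩ => ⟨k, Subtype.ext hk⟩
  have hPT : (P : Subgroup G) ≤ T := fun g hg => by
    obtain ⟨k, hk⟩ := P.isPGroup' ⟨g, hg⟩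
    exact ⟨k, congrArg Subtype.val hk⟩
  have hT_normal : T.Normal :=
    ⟨fun g ⟨k, hk⟩ h => ⟨k, by rw [conj_pow, hk, mul_one, mul_inv_cancel]⟩⟩
  exact P.is_maximal' hT hPT ▸ hT_normal

end TwoGenerated

theorem exists_notMem_nilpotentizer {G : Type*} [Group G] [Finite G]
    (hG : ¬ Group.IsNilpotent G) : ∃ x, x ∉ nilpotentizer G := by
  by_contra! h
  exact hG (isNilpotent_of_forall_isNilpotent_closure_pair h)

section Prod

variable {G H : Type*} [Group G] [Group H]

theorem nilpotentizer_prod_s11 :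
    nilpotentizer (G × H) = nilpotentizer G ×ˢ nilpotentizer H := by
  ext ⟨a, b⟩
  refine ⟨fun hab => ⟨fun g => ?_, fun h => ?_⟩, fun ⟨ha, hb⟩ ⟨g, h⟩ => ?_⟩
  · have := isNilpotent_map_s11 (MonoidHom.fst G H) (hab (g, 1))
    rwa [MonoidHom.map_closure, Set.image_pair] at this
  · have := isNilpotent_map_s11 (MonoidHom.snd G H) (hab (1, h))
    rwa [MonoidHom.map_closure, Set.image_pair] at this
  · refine isNilpotent_of_le_s11 (closure_le _ |>.mpr ?_) (isNilpotent_prod (ha g) (hb h))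
    rintro _ (rfl | rfl) <;>
      exact mem_prod.mpr ⟨subset_closure (by simp), subset_closure (by simp)⟩

theorem notMem_nilpotentizer_prod_of_left {a : G} (ha : a ∉ nilpotentizer G) (b : H) :
    (a, b) ∉ nilpotentizer (G × H) := by
  rw [nilpotentizer_prod_s11, Set.mem_prod]
  exact fun h => ha h.1

theorem notMem_nilpotentizer_prod_of_right (a : G) {b : H} (hb : b ∉ nilpotentizer H) :
    (a, b) ∉ nilpotentizer (G × H) := by
  rw [nilpotentizer_prod_s11, Set.mem_prod]
  exact fun h => hb h.2

end Prod

theorem nilpotentGraph_reachable_of_commute {G : Type*} [Group G] {x y : G}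
    (hx : x ∉ nilpotentizer G) (hy : y ∉ nilpotentizer G) (h : Commute x y) :
    (nilpotentGraph G).Reachable ⟨x, hx⟩ ⟨y, hy⟩ := by
  rcases eq_or_ne (⟨x, hx⟩ : {x : G // x ∉ nilpotentizer G}) ⟨y, hy⟩ with hxy | hxy
  · rw [hxy]
  · exact SimpleGraph.Adj.reachable ⟨hxy, h.isNilpotent_closure_pair⟩

theorem nilpotentGraph_prod_reachable_from_inl {G H : Type*} [Group G] [Group H] {x₀ : G}
    (hx₀ : x₀ ∉ nilpotentizer G) {y₀ : H} (hy₀ : y₀ ∉ nilpotentizer H)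
    (v : {x : G × H // x ∉ nilpotentizer (G × H)}) :
    (nilpotentGraph (G × H)).Reachable
      ⟨(x₀, 1), notMem_nilpotentizer_prod_of_left hx₀ 1⟩ v := by
  obtain ⟨⟨a, b⟩, hv⟩ := v
  have hab : a ∉ nilpotentizer G ∨ b ∉ nilpotentizer H := by
    rwa [nilpotentizer_prod_s11, Set.mem_prod, not_and_or] at hv
  have hx₀' := notMem_nilpotentizer_prod_of_left hx₀ (1 : H)
  rcases hab with ha | hb
  · have hy₀' := notMem_nilpotentizer_prod_of_right (1 : G) hy₀
    have ha' := notMem_nilpotentizer_prod_of_left ha (1 : H)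
    have h₁ := nilpotentGraph_reachable_of_commute hx₀' hy₀'
      ((Commute.one_right x₀).prod (Commute.one_left y₀))
    have h₂ := nilpotentGraph_reachable_of_commute hy₀' ha'
      ((Commute.one_left a).prod (Commute.one_right y₀))
    have h₃ := nilpotentGraph_reachable_of_commute ha' hv
      ((Commute.refl a).prod (Commute.one_left b))
    exact (h₁.trans h₂).trans h₃
  · have hb' := notMem_nilpotentizer_prod_of_right (1 : G) hb
    have h₁ := nilpotentGraph_reachable_of_commute hx₀' hb'
      ((Commute.one_right x₀).prod (Commute.one_left b))
    have h₂ := nilpotentGraph_reachable_of_commute hb' hv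
      ((Commute.one_left a).prod (Commute.refl b))
    exact h₁.trans h₂

theorem nilpotentGraph_prod_connected {G H : Type*} [Group G] [Group H] [Finite G] [Finite H]
    (hG : ¬ Group.IsNilpotent G) (hH : ¬ Group.IsNilpotent H) :
    (nilpotentGraph (G × H)).Connected := by
  obtain ⟨x₀, hx₀⟩ := exists_notMem_nilpotentizer hG
  obtain ⟨y₀, hy₀⟩ := exists_notMem_nilpotentizer hH
  exact (SimpleGraph.connected_iff_exists_forall_reachable _).mpr
    ⟨_, nilpotentGraph_prod_reachable_from_inl hx₀ hy₀⟩
end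

section
/- Let G be a finite non-nilpotent group and H a finite nilpotent group. Then the number of connected components of the nilpotent graph of G × H equals the number of connected components of the nilpotent graph of G. In particular, the nilpotent graph of G is connected iff the nilpotent graph of G × H is connected. -/
/-!
Since `H` is nilpotent, a subgroup of `G × H` is nilpotent exactly when its projection to `G`
is: it embeds into (projection) × `H`. Hence `(g, h) ↦ g` maps the vertices of the nilpotent
graph of `G × H` onto those of the nilpotent graph of `G`, it matches the edges between
vertices with different images, and each fibre `{g} × H` is a clique. Such a map identifies the
connected components of the two graphs.
-/

namespace SimpleGraph

variable {V W : Type*} {G : SimpleGraph V} {K : SimpleGraph W} {f : V → W}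

theorem reachable_iff_reachable_of_surjective (hf : Function.Surjective f)
    (hfiber : ∀ v w, f v = f w → G.Reachable v w)
    (hadj : ∀ v w, f v ≠ f w → (G.Adj v w ↔ K.Adj (f v) (f w))) (v w : V) :
    G.Reachable v w ↔ K.Reachable (f v) (f w) := by
  simp only [reachable_iff_reflTransGen]
  constructor
  · refine fun hG => Relation.ReflTransGen.lift' f (fun a b hab => ?_) v w hG
    by_cases hfab : f a = f b
    · rw [Function.onFun, hfab]
    · exact .single ((hadj a b hfab).mp hab)
  · intro hK
    have hlift : Relation.ReflTransGen G.Adj (Function.surjInv hf (f v))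
        (Function.surjInv hf (f w)) := by
      refine Relation.ReflTransGen.lift' (Function.surjInv hf) (fun a b hab => ?_) _ _ hK
      rw [← Function.surjInv_eq hf a, ← Function.surjInv_eq hf b] at hab
      exact .single ((hadj _ _ hab.ne).mpr hab)
    rw [← reachable_iff_reflTransGen] at hlift ⊢
    exact (hfiber _ _ (Function.surjInv_eq hf _).symm).trans
      (hlift.trans (hfiber _ _ (Function.surjInv_eq hf _)))

noncomputable def connectedComponentEquivOfReachableIff (hf : Function.Surjective f)
    (h : ∀ v w, G.Reachable v w ↔ K.Reachable (f v) (f w)) :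
    G.ConnectedComponent ≃ K.ConnectedComponent :=
  Equiv.ofBijective
    (ConnectedComponent.lift (fun v => K.connectedComponentMk (f v))
      fun v w p _ => ConnectedComponent.sound ((h v w).mp p.reachable))
    ⟨ConnectedComponent.ind₂ fun v w hvw =>
        ConnectedComponent.sound ((h v w).mpr (ConnectedComponent.exact hvw)),
      ConnectedComponent.ind fun b =>
        ⟨G.connectedComponentMk (Function.surjInv hf b), by simp [Function.surjInv_eq hf b]⟩⟩

theorem connected_iff_of_reachable_iff (hf : Function.Surjective f)
    (h : ∀ v w, G.Reachable v w ↔ K.Reachable (f v) (f w)) :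
    G.Connected ↔ K.Connected := by
  simp only [connected_iff_exists_forall_reachable, h, hf.forall, hf.exists]

end SimpleGraph

section Product

variable {G H : Type*} [Group G] [Group H] [Group.IsNilpotent H]

theorem isNilpotent_closure_prod_iff (S : Set (G × H)) :
    Group.IsNilpotent (Subgroup.closure S) ↔
      Group.IsNilpotent (Subgroup.closure (Prod.fst '' S)) := by
  constructor
  · intro hS
    have hmap : (Subgroup.closure S).map (MonoidHom.fst G H) = Subgroup.closure (Prod.fst '' S) :=
      MonoidHom.map_closure _ _
    rw [← hmap]
    exact Group.nilpotent_of_surjective _ (MonoidHom.subgroupMap_surjective _ _)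
  · intro hS
    have hle : Subgroup.closure S ≤ (Subgroup.closure (Prod.fst '' S)).prod ⊤ :=
      (Subgroup.closure_le _).mpr fun x hx =>
        Subgroup.mem_prod.mpr ⟨Subgroup.subset_closure ⟨x, hx, rfl⟩, Subgroup.mem_top _⟩
    have := Group.nilpotent_of_mulEquiv
      (Subgroup.prodEquiv (Subgroup.closure (Prod.fst '' S)) (⊤ : Subgroup H)).symm
    exact Group.nilpotent_of_mulEquiv (Subgroup.subgroupOfEquivOfLe hle)

theorem isNilpotent_closure_pair_prod_iff (v w : G × H) :
    Group.IsNilpotent (Subgroup.closure ({v, w} : Set (G × H))) ↔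
      Group.IsNilpotent (Subgroup.closure ({v.1, w.1} : Set G)) := by
  rw [isNilpotent_closure_prod_iff, Set.image_pair]

theorem mem_nilpotentizer_prod_iff (v : G × H) :
    v ∈ nilpotentizer (G × H) ↔ v.1 ∈ nilpotentizer G :=
  ⟨fun h g => (isNilpotent_closure_pair_prod_iff v (g, 1)).mp (h (g, 1)),
    fun h w => (isNilpotent_closure_pair_prod_iff v w).mpr (h w.1)⟩

variable (G H) in
def nilpotentGraphProdFst :
    {x : G × H // x ∉ nilpotentizer (G × H)} → {x : G // x ∉ nilpotentizer G} :=
  fun v => ⟨v.1.1, (mem_nilpotentizer_prod_iff v.1).not.mp v.2⟩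

theorem nilpotentGraphProdFst_surjective :
    Function.Surjective (nilpotentGraphProdFst G H) :=
  fun g => ⟨⟨(g.1, 1), (mem_nilpotentizer_prod_iff _).not.mpr g.2⟩, rfl⟩

theorem nilpotentGraph_prod_reachable_iff (v w : {x : G × H // x ∉ nilpotentizer (G × H)}) :
    (nilpotentGraph (G × H)).Reachable v w ↔
      (nilpotentGraph G).Reachable (nilpotentGraphProdFst G H v) (nilpotentGraphProdFst G H w) := by
  refine SimpleGraph.reachable_iff_reachable_of_surjective nilpotentGraphProdFst_surjective
    (fun v w hfib => ?_) (fun v w hvw => ?_) v w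
  · obtain rfl | hne := eq_or_ne v w
    · rfl
    have hfst : v.1.1 = w.1.1 := congrArg Subtype.val hfib
    refine SimpleGraph.Adj.reachable ⟨hne, ?_⟩
    rw [isNilpotent_closure_pair_prod_iff, hfst, Set.pair_eq_singleton,
      ← Subgroup.zpowers_eq_closure]
    open scoped IsMulCommutative in infer_instance
  · have hne : v ≠ w := fun h => hvw (h ▸ rfl)
    exact and_congr (iff_of_true hne hvw) (isNilpotent_closure_pair_prod_iff _ _)

end Product

theorem nilpotentGraph_card_components_prod_nilpotent_general {G H : Type*} [Group G] [Group H]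
    (hH : Group.IsNilpotent H) :
    Nat.card ((nilpotentGraph (G × H)).ConnectedComponent) =
      Nat.card ((nilpotentGraph G).ConnectedComponent) ∧
    ((nilpotentGraph G).Connected ↔ (nilpotentGraph (G × H)).Connected) :=
  ⟨Nat.card_congr (SimpleGraph.connectedComponentEquivOfReachableIff
      nilpotentGraphProdFst_surjective nilpotentGraph_prod_reachable_iff),
    (SimpleGraph.connected_iff_of_reachable_iff nilpotentGraphProdFst_surjective
      nilpotentGraph_prod_reachable_iff).symm⟩

theorem nilpotentGraph_card_components_prod_nilpotent {G H : Type*} [Group G] [Group H]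
    [Finite G] [Finite H] (hG : ¬ Group.IsNilpotent G) (hH : Group.IsNilpotent H) :
    Nat.card ((nilpotentGraph (G × H)).ConnectedComponent) =
      Nat.card ((nilpotentGraph G).ConnectedComponent) ∧
    ((nilpotentGraph G).Connected ↔ (nilpotentGraph (G × H)).Connected) :=
  nilpotentGraph_card_components_prod_nilpotent_general hH
end

section
/- Let G be a finite non-nilpotent group. The nilpotent graph of G is isomorphic (as a graph) to the nilpotent graph of (G/Z*(G)) × Z*(G). -/
/-!
Every term `ζₙ G` of the upper central series is nilpotent, and a subgroup `K` whose image in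
`G ⧸ ζₙ G` is nilpotent is itself nilpotent, since `K ⊓ ζₙ G ≤ ζₙ K`. So for the bijection
`G ≃ (G ⧸ Z*) × Z*` whose first component is the quotient map, two elements generate a nilpotent
subgroup iff their images in `G ⧸ Z*` do, iff their images in the product do (`Z*` being
nilpotent). A bijection preserving this relation preserves the nilpotentizer and adjacency.
-/

open Group

namespace Subgroup

variable {G H : Type*} [Group G] [Group H]

theorem comap_upperCentralSeries_le_of_injective {f : H →* G} (hf : Function.Injective f) :
    ∀ n, (upperCentralSeries G n).comap f ≤ upperCentralSeries H n
  | 0 => by simpa [MonoidHom.ker_eq_bot_iff] using hf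
  | n + 1 => fun x hx y => comap_upperCentralSeries_le_of_injective hf n <| by
    rw [mem_comap, map_commutatorElement]
    exact mem_upperCentralSeries_succ_iff.mp hx (f y)

theorem comap_upperCentralSeries_le_of_ker_le {f : G →* H} {n : ℕ}
    (hf : f.ker ≤ upperCentralSeries G n) :
    ∀ m, (upperCentralSeries H m).comap f ≤ upperCentralSeries G (n + m)
  | 0 => by simpa using hf
  | m + 1 => fun x hx y => comap_upperCentralSeries_le_of_ker_le hf m <| by
    rw [mem_comap, map_commutatorElement]
    exact mem_upperCentralSeries_succ_iff.mp hx (f y)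

instance isNilpotent_upperCentralSeries (n : ℕ) : IsNilpotent (upperCentralSeries G n) :=
  ⟨n, eq_top_iff.mpr fun x _ =>
    comap_upperCentralSeries_le_of_injective (subtype_injective _) n x.2⟩

theorem isNilpotent_of_ker_le_upperCentralSeries (f : G →* H) {n : ℕ}
    (hf : f.ker ≤ upperCentralSeries G n) [IsNilpotent H] : IsNilpotent G := by
  obtain ⟨m, hm⟩ := IsNilpotent.nilpotent H
  exact ⟨n + m, eq_top_iff.mpr <| by simpa [hm] using comap_upperCentralSeries_le_of_ker_le hf m⟩

theorem isNilpotent_map_iff_of_ker_le_upperCentralSeries_s14 (f : G →* H) {n : ℕ}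
    (hf : f.ker ≤ upperCentralSeries G n) (K : Subgroup G) :
    IsNilpotent (K.map f) ↔ IsNilpotent K := by
  refine ⟨fun _ => isNilpotent_of_ker_le_upperCentralSeries (f.subgroupMap K) (n := n) ?_,
    fun _ => Group.nilpotent_of_surjective _ (f.subgroupMap_surjective K)⟩
  rw [ker_subgroupMap]
  exact (subgroupOf_mono K hf).trans
    (comap_upperCentralSeries_le_of_injective K.subtype_injective n)

theorem isNilpotent_map_fst_iff {A B : Type*} [Group A] [Group B] [IsNilpotent B]
    (K : Subgroup (A × B)) : IsNilpotent (K.map (MonoidHom.fst A B)) ↔ IsNilpotent K := by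
  refine ⟨fun _ => ?_,
    fun _ => Group.nilpotent_of_surjective _ ((MonoidHom.fst A B).subgroupMap_surjective K)⟩
  have hle : K ≤ (K.map (MonoidHom.fst A B)).prod ⊤ := fun x hx =>
    mem_prod.mpr ⟨mem_map_of_mem _ hx, mem_top _⟩
  have : IsNilpotent ((K.map (MonoidHom.fst A B)).prod (⊤ : Subgroup B)) :=
    Group.nilpotent_of_mulEquiv (prodEquiv _ _).symm
  exact Group.nilpotent_of_mulEquiv (subgroupOfEquivOfLe hle)

end Subgroup

section NilpotentGraph

variable {G H : Type*} [Group G] [Group H]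

theorem mem_nilpotentizer_iff_of_equiv (e : G ≃ H)
    (he : ∀ x y, IsNilpotent (Subgroup.closure {x, y}) ↔
      IsNilpotent (Subgroup.closure {e x, e y})) (x : G) :
    x ∈ nilpotentizer G ↔ e x ∈ nilpotentizer H :=
  e.forall_congr (he x)

def nilpotentGraphIsoOfEquiv (e : G ≃ H)
    (he : ∀ x y, IsNilpotent (Subgroup.closure {x, y}) ↔
      IsNilpotent (Subgroup.closure {e x, e y})) :
    nilpotentGraph G ≃g nilpotentGraph H where
  toEquiv := e.subtypeEquiv fun x => not_congr (mem_nilpotentizer_iff_of_equiv e he x)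
  map_rel_iff' {a b} := and_congr (Equiv.injective _).ne_iff (he a b).symm

end NilpotentGraph

open Subgroup in
theorem nilpotentGraph_iso_quotient_prod_hypercenter_general {G : Type*} [Group G] :
    Nonempty ((nilpotentGraph G) ≃g
      (nilpotentGraph ((G ⧸ hypercenter G) × (hypercenter G)))) := by
  let e : G ≃ (G ⧸ hypercenter G) × hypercenter G := groupEquivQuotientProdSubgroup
  have : IsNilpotent (hypercenter G) := isNilpotent_upperCentralSeries _
  refine ⟨nilpotentGraphIsoOfEquiv e fun x y => ?_⟩
  have hfst : (closure {e x, e y}).map (MonoidHom.fst _ _) =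
      (closure {x, y}).map (QuotientGroup.mk' (hypercenter G)) := by
    simp only [MonoidHom.map_closure, Set.image_pair]
    -- the first component of `groupEquivQuotientProdSubgroup` is the quotient map by definition
    rfl
  rw [← isNilpotent_map_fst_iff, hfst]
  exact (isNilpotent_map_iff_of_ker_le_upperCentralSeries_s14 (QuotientGroup.mk' _)
    (QuotientGroup.ker_mk' _).le _).symm

theorem nilpotentGraph_iso_quotient_prod_hypercenter {G : Type*} [Group G] [Finite G]
    (hG : ¬ Group.IsNilpotent G) :
    Nonempty ((nilpotentGraph G) ≃g
      (nilpotentGraph ((G ⧸ hypercenter G) × (hypercenter G)))) :=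
  nilpotentGraph_iso_quotient_prod_hypercenter_general
end

section
/- If n or n − 1 is a prime number with n ≥ 3, then the symmetric group S_n contains a self-centralizing cyclic subgroup generated by an n-cycle (respectively an (n−1)-cycle), i.e., a subgroup ⟨σ⟩ with C_{S_n}(σᵏ) = ⟨σ⟩ for all σᵏ ≠ 1; consequently the nilpotent graph of S_n is disconnected. -/
/-!
For a prime `p`, a `p`-cycle `σ` in `Sₙ` with `n ∈ {p, p + 1}` has centralizer of order
`p * (n - p)! = p`, so `C(σ) = ⟨σ⟩`; every nontrivial power of `σ` generates `⟨σ⟩`, hence has the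
same centralizer. If `x ≠ 1` lies in such a subgroup `H` and `⟨x, y⟩` is nilpotent, a nontrivial
central element `z` of `⟨x, y⟩` centralizes `x`, so `z ∈ H`, and `y` centralizes `z`, so `y ∈ H`.
Thus no path of the nilpotent graph leaves `H`, while `H ≠ Sₙ` because `p ≤ n < n!` for `n ≥ 3`.
-/

open Equiv.Perm Subgroup Finset

section

variable {G : Type*} [Group G]

/-- Strongly self-centralizing, except that `H ≤ centralizer {x}` is not demanded (it holds
whenever `H` is abelian). -/
def Subgroup.IsStronglySelfCentralizing (H : Subgroup G) : Prop :=
  ∀ x ∈ H, x ≠ 1 → centralizer {x} ≤ H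

theorem one_mem_nilpotentizer : (1 : G) ∈ nilpotentizer G := by
  intro h
  rw [closure_insert_one, ← zpowers_eq_closure]
  let _ : CommGroup (zpowers h) := IsCyclic.commGroup
  infer_instance

theorem Group.IsNilpotent.exists_mem_center_ne_one [Nontrivial G] [Group.IsNilpotent G] :
    ∃ z ∈ center G, z ≠ 1 :=
  (bot_or_exists_ne_one _).resolve_left (Group.IsNilpotent.center_ne_bot G)

theorem centralizer_pow_eq_of_prime_orderOf {g : G}
    (hp : (orderOf g).Prime) {k : ℕ} (hk : g ^ k ≠ 1) :
    centralizer {g ^ k} = centralizer {g} := by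
  have hcop : k.gcd (orderOf g) = 1 :=
    Nat.Coprime.symm ((hp.coprime_iff_not_dvd).mpr fun h => hk (orderOf_dvd_iff_pow_eq_one.mp h))
  have hgen : zpowers (g ^ k) = zpowers g :=
    le_antisymm (zpowers_le.mpr (pow_mem (mem_zpowers g) k))
      (zpowers_le.mpr (mem_zpowers_pow_iff.mpr hcop))
  rw [← centralizer_closure, ← zpowers_eq_closure, hgen, zpowers_eq_closure, centralizer_closure]

theorem mem_of_isNilpotent_closure_pair {H : Subgroup G}
    (hH : H.IsStronglySelfCentralizing) {x y : G} (hx : x ∈ H) (hx1 : x ≠ 1)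
    (hxy : Group.IsNilpotent (closure {x, y})) : y ∈ H := by
  set K := closure ({x, y} : Set G)
  have hxK : x ∈ K := subset_closure (by simp)
  have hyK : y ∈ K := subset_closure (by simp)
  have : Nontrivial K := ⟨⟨⟨x, hxK⟩, 1, fun h => hx1 (congrArg Subtype.val h)⟩⟩
  obtain ⟨z, hz, hz1⟩ := Group.IsNilpotent.exists_mem_center_ne_one (G := K)
  have hzH : (z : G) ∈ H := by
    refine hH x hx hx1 (mem_centralizer_singleton_iff.mpr ?_)
    exact congrArg Subtype.val (mem_center_iff.mp hz ⟨x, hxK⟩).symm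
  refine hH z hzH (fun h => hz1 (Subtype.ext h)) (mem_centralizer_singleton_iff.mpr ?_)
  exact congrArg Subtype.val (mem_center_iff.mp hz ⟨y, hyK⟩)

theorem mem_of_nilpotentGraph_reachable {H : Subgroup G}
    (hH : H.IsStronglySelfCentralizing) {u v : {x : G // x ∉ nilpotentizer G}}
    (huv : (nilpotentGraph G).Reachable u v) (hu : (u : G) ∈ H) : (v : G) ∈ H := by
  obtain ⟨p⟩ := huv
  induction p with
  | nil => exact hu
  | @cons a _ _ hadj _ ih =>
    exact ih (mem_of_isNilpotent_closure_pair hH hu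
      (fun h => a.2 (h ▸ one_mem_nilpotentizer)) hadj.2)

theorem not_connected_nilpotentGraph {H : Subgroup G}
    (hH : H.IsStronglySelfCentralizing) (hbot : H ≠ ⊥) (htop : H ≠ ⊤) :
    ¬ (nilpotentGraph G).Connected := by
  obtain ⟨x, hx, hx1⟩ := (bot_or_exists_ne_one H).resolve_left hbot
  obtain ⟨y, -, hy⟩ := SetLike.exists_of_lt (lt_top_iff_ne_top.mpr htop)
  have hxy : ¬ Group.IsNilpotent (closure {x, y}) := fun h =>
    hy (mem_of_isNilpotent_closure_pair hH hx hx1 h)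
  have hxN : x ∉ nilpotentizer G := fun h => hxy (h y)
  have hyN : y ∉ nilpotentizer G := fun h => hxy (Set.pair_comm x y ▸ h x)
  exact fun hconn => hy (mem_of_nilpotentGraph_reachable hH (hconn ⟨x, hxN⟩ ⟨y, hyN⟩) hx)

end

namespace Equiv.Perm

variable {α : Type*} [Fintype α] [DecidableEq α] {σ : Perm α}

theorem exists_isCycle_card_support_eq {t : ℕ} (ht : 2 ≤ t) (htα : t ≤ Fintype.card α) :
    ∃ σ : Perm α, σ.IsCycle ∧ #σ.support = t := by
  obtain ⟨σ, hσ⟩ := (exists_with_cycleType_iff α (m := {t})).mpr ⟨by simpa, by simpa⟩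
  exact ⟨σ, card_cycleType_eq_one.mp (by simp [hσ]), by rw [← sum_cycleType, hσ]; simp⟩

/-- Counting: the centralizer of a `t`-cycle in `Perm α` has order `t * (|α| - t)!`. -/
theorem IsCycle.centralizer_eq_zpowers (hσ : σ.IsCycle) (h : Fintype.card α ≤ #σ.support + 1) :
    centralizer {σ} = zpowers σ := by
  refine (eq_of_le_of_card_ge (zpowers_le.mpr (mem_centralizer_singleton_iff.mpr rfl)) ?_).symm
  have : Fintype.card α - #σ.support ≤ 1 := by omega
  rw [nat_card_centralizer, hσ.cycleType, Nat.card_zpowers, hσ.orderOf]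
  simp [Nat.factorial_eq_one.mpr this]

theorem IsCycle.zpowers_ne_top (hσ : σ.IsCycle) (hα : 3 ≤ Fintype.card α) : zpowers σ ≠ ⊤ := by
  intro htop
  have hcard : Nat.card (zpowers σ) = Nat.card (⊤ : Subgroup (Perm α)) := by rw [htop]
  rw [Nat.card_zpowers, hσ.orderOf, card_top, Nat.card_perm, Nat.card_eq_fintype_card] at hcard
  have := Nat.lt_factorial_self hα
  have := card_le_univ σ.support
  omega

theorem exists_isCycle_selfCentralizing {t : ℕ} (ht : t.Prime) (htα : t ≤ Fintype.card α)
    (hαt : Fintype.card α ≤ t + 1) :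
    ∃ σ : Perm α, σ.IsCycle ∧ #σ.support = t ∧
      ∀ k : ℕ, σ ^ k ≠ 1 → centralizer {σ ^ k} = zpowers σ := by
  obtain ⟨σ, hσ, hcard⟩ := exists_isCycle_card_support_eq ht.two_le htα
  refine ⟨σ, hσ, hcard, fun k hk => ?_⟩
  rw [centralizer_pow_eq_of_prime_orderOf (hσ.orderOf ▸ hcard ▸ ht) hk,
    hσ.centralizer_eq_zpowers (hcard ▸ hαt)]

end Equiv.Perm

theorem symmGroup_selfCentralizing_cycle_and_disconnected (n : ℕ) (hn : 3 ≤ n)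
    (h : Nat.Prime n ∨ Nat.Prime (n - 1)) :
    ((Nat.Prime n → ∃ σ : Equiv.Perm (Fin n), σ.IsCycle ∧ σ.support.card = n ∧
        ∀ k : ℕ, σ ^ k ≠ 1 → Subgroup.centralizer {σ ^ k} = Subgroup.zpowers σ) ∧
      (Nat.Prime (n - 1) → ∃ σ : Equiv.Perm (Fin n), σ.IsCycle ∧ σ.support.card = n - 1 ∧
        ∀ k : ℕ, σ ^ k ≠ 1 → Subgroup.centralizer {σ ^ k} = Subgroup.zpowers σ)) ∧
    ¬ (nilpotentGraph (Equiv.Perm (Fin n))).Connected := by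
  have hcyc {t : ℕ} (ht : t.Prime) (htn : t ≤ n) (hnt : n ≤ t + 1) :=
    exists_isCycle_selfCentralizing (α := Fin n) ht (by simpa) (by simpa)
  refine ⟨⟨fun hp => hcyc hp le_rfl (by omega), fun hp => hcyc hp (by omega) (by omega)⟩, ?_⟩
  obtain ⟨t, ht, htn, hnt⟩ : ∃ t, t.Prime ∧ t ≤ n ∧ n ≤ t + 1 :=
    h.elim (fun hp => ⟨n, hp, le_rfl, by omega⟩) (fun hp => ⟨n - 1, hp, by omega, by omega⟩)
  obtain ⟨σ, hσ, -, hcent⟩ := hcyc ht htn hnt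
  refine not_connected_nilpotentGraph (H := zpowers σ) ?_ (zpowers_ne_bot.mpr hσ.ne_one)
    (hσ.zpowers_ne_top (by simpa))
  intro x hx hx1
  obtain ⟨k, rfl⟩ := (Submonoid.mem_powers_iff _ _).mp (mem_powers_iff_mem_zpowers.mpr hx)
  exact (hcent k hx1).le
end
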